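/- A complex Banach space (E, ‖·‖) satisfies the strong maximum modulus principle (every holomorphic map η from a connected complex manifold/open connected subset of a complex Banach space to E such that ‖η‖ has a local maximum is constant) if and only if E is strictly plurisubharmonic (every holomorphic map γ : D̄ → E with image in the unit sphere is constant). -/

import Mathlib

open MeasureTheory Metric Set
open Topology Filter

/-- `γ` is holomorphic on a neighbourhood of the closed unit disc. -/
def HolOnDisc {E : Type*} [NormedAddCommGroup E] [NormedSpace ℂ E] (γ : ℂ → E) : Prop :=
  ∃ U : Set ℂ, IsOpen U ∧ closedBall (0 : ℂ) 1 ⊆ U ∧ DifferentiableOn ℂ γ U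

/-- A real-valued function is plurisubharmonic on `X` if it satisfies the sub-mean-value
inequality along every holomorphic map from the closed unit disc into `X`. -/
def PSHROn {E : Type*} [NormedAddCommGroup E] [NormedSpace ℂ E]
    (f : E → ℝ) (X : Set E) : Prop :=
  ∀ γ : ℂ → E, HolOnDisc γ → (∀ z ∈ closedBall (0 : ℂ) 1, γ z ∈ X) →
    f (γ 0) ≤ (2 * Real.pi)⁻¹ *
      ∫ t in (0 : ℝ)..(2 * Real.pi), f (γ (Complex.exp (t * Complex.I)))

/-- A real-valued function is strictly plurisubharmonic on `X` if moreover the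
sub-mean-value inequality is strict along every non-constant such map. -/
def StrictPSHROn {E : Type*} [NormedAddCommGroup E] [NormedSpace ℂ E]
    (f : E → ℝ) (X : Set E) : Prop :=
  PSHROn f X ∧
  ∀ γ : ℂ → E, HolOnDisc γ → (∀ z ∈ closedBall (0 : ℂ) 1, γ z ∈ X) →
    ¬ Set.EqOn γ (fun _ => γ 0) (closedBall (0 : ℂ) 1) →
    f (γ 0) < (2 * Real.pi)⁻¹ *
      ∫ t in (0 : ℝ)..(2 * Real.pi), f (γ (Complex.exp (t * Complex.I)))


/-- 1-D identity theorem along a complex line. -/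
lemma lineEq_aux {F E : Type*} [NormedAddCommGroup F] [NormedSpace ℂ F]
    [NormedAddCommGroup E] [NormedSpace ℂ E] [CompleteSpace E]
    {η : F → E} {U : Set F} (hη : DifferentiableOn ℂ η U)
    {s w : F} {R : ℝ} (hR1 : 1 < R)
    (hR : ∀ z : ℂ, ‖z‖ < R → s + z • (w - s) ∈ U)
    {e : E} (hloc : ∀ᶠ x in 𝓝 s, η x = e) : η w = e := by
  set L : ℂ → F := fun z => s + z • (w - s) with hL
  have hLd : Differentiable ℂ L := (differentiable_id.smul_const (w - s)).const_add s
  have hmap : MapsTo L (ball (0 : ℂ) R) U := fun z hz => hR z (by simpa using hz)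
  have hg : DifferentiableOn ℂ (η ∘ L) (ball (0 : ℂ) R) :=
    hη.comp hLd.differentiableOn hmap
  have hga : AnalyticOnNhd ℂ (η ∘ L) (ball (0 : ℂ) R) :=
    hg.analyticOnNhd isOpen_ball
  have hL0 : Filter.Tendsto L (𝓝 0) (𝓝 s) := by
    have := hLd.continuous.tendsto 0
    simpa [hL] using this
  have hev : (η ∘ L) =ᶠ[𝓝 (0 : ℂ)] fun _ => e := hL0.eventually hloc
  have h0 : (0 : ℂ) ∈ ball (0 : ℂ) R := by simp [lt_trans one_pos hR1]
  have heq := hga.eqOn_of_preconnected_of_eventuallyEq analyticOnNhd_const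
    (convex_ball (0 : ℂ) R).isPreconnected h0 hev
  have h1 : (1 : ℂ) ∈ ball (0 : ℂ) R := by simp [hR1]
  simpa [hL] using heq h1

/-- **The strong maximum modulus principle is equivalent to strict
plurisubharmonicity.** A complex Banach space `E` satisfies: every holomorphic map `η`
from a connected open subset of a complex Banach space into `E` whose norm has a local
maximum is constant, if and only if every holomorphic map from the closed unit disc
into the unit sphere of `E` is constant. -/
theorem strong_max_modulus_iff_strictly_psh.{u} {E : Type*} [NormedAddCommGroup E]
    [NormedSpace ℂ E] [CompleteSpace E] :
    (∀ (F : Type u) [NormedAddCommGroup F] [NormedSpace ℂ F] [CompleteSpace F]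
      (U : Set F), IsOpen U → IsConnected U →
      ∀ η : F → E, DifferentiableOn ℂ η U →
      ∀ x₀ ∈ U, IsLocalMaxOn (fun x => ‖η x‖) U x₀ →
      ∀ x ∈ U, ∀ y ∈ U, η x = η y) ↔
    (∀ γ : ℂ → E, HolOnDisc γ → (∀ z ∈ closedBall (0 : ℂ) 1, ‖γ z‖ = 1) →
      Set.EqOn γ (fun _ => γ 0) (closedBall (0 : ℂ) 1)) := by
  constructor
  · -- strong max modulus ⇒ sphere-valued maps constant
    rintro h γ ⟨V, hVo, hVsub, hVd⟩ hsph
    have hball : ∀ z ∈ ball (0 : ℂ) 1, γ z = γ 0 := by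
      intro z hz
      -- set up the ULift picture
      set U' : Set (ULift.{u} ℂ) := ULift.down ⁻¹' ball (0 : ℂ) 1 with hU'
      have hdowncont : Continuous (ULift.down : ULift.{u} ℂ → ℂ) :=
        Homeomorph.ulift.continuous
      have hUo : IsOpen U' := isOpen_ball.preimage hdowncont
      have hUc : IsConnected U' := by
        have himg : (Homeomorph.ulift (X := ℂ)).symm '' ball (0 : ℂ) 1 = U' := by
          ext x
          simp [hU', Homeomorph.ulift]
          exact ⟨fun ⟨y, hy, hyx⟩ => hyx ▸ hy, fun h => ⟨x.down, h, rfl⟩⟩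
        rw [← himg]
        exact ((convex_ball (0 : ℂ) 1).isConnected (nonempty_ball.2 one_pos)).image _
          (Homeomorph.ulift (X := ℂ)).symm.continuous.continuousOn
      set η : ULift.{u} ℂ → E := fun x => γ x.down with hη
      have hdownd : Differentiable ℂ (ULift.down : ULift.{u} ℂ → ℂ) :=
        ((LinearIsometryEquiv.ulift ℂ ℂ).toContinuousLinearEquiv :
          ULift.{u} ℂ ≃L[ℂ] ℂ).differentiable
      have hηd : DifferentiableOn ℂ η U' := by
        refine hVd.comp hdownd.differentiableOn ?_
        intro x hx
        exact hVsub (ball_subset_closedBall hx)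
      have hx₀ : (ULift.up 0 : ULift.{u} ℂ) ∈ U' := by simp [hU']
      have hmax : IsLocalMaxOn (fun x => ‖η x‖) U' (ULift.up 0) := by
        apply eventually_nhdsWithin_of_forall
        intro x hx
        have h1 : ‖γ x.down‖ = 1 := hsph _ (ball_subset_closedBall hx)
        have h2 : ‖γ (0 : ℂ)‖ = 1 := hsph 0 (by simp)
        simp [hη, h1, h2]
      have := h (ULift.{u} ℂ) U' hUo hUc η hηd (ULift.up 0) hx₀ hmax
        (ULift.up z) (by simpa [hU'] using hz) (ULift.up 0) hx₀
      simpa [hη] using this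
    -- extend to the boundary by continuity
    intro z hz
    have hzc : z ∈ closure (ball (0 : ℂ) 1) := by
      rwa [closure_ball (0 : ℂ) one_ne_zero]
    have hca : ContinuousAt γ z :=
      (hVd.differentiableAt (hVo.mem_nhds (hVsub hz))).continuousAt
    haveI : (𝓝[ball (0 : ℂ) 1] z).NeBot := mem_closure_iff_nhdsWithin_neBot.1 hzc
    have t1 : Filter.Tendsto γ (𝓝[ball (0 : ℂ) 1] z) (𝓝 (γ z)) :=
      hca.continuousWithinAt
    have t2 : Filter.Tendsto γ (𝓝[ball (0 : ℂ) 1] z) (𝓝 (γ 0)) := by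
      refine Filter.Tendsto.congr' ?_ tendsto_const_nhds
      exact eventually_mem_nhdsWithin.mono fun w hw => (hball w hw).symm
    exact tendsto_nhds_unique t1 t2
  · -- sphere-valued maps constant ⇒ strong max modulus
    intro hpsh F _ _ _ U hUo hUc η hη x₀ hx₀ hmax x hx y hy
    set e : E := η x₀ with he
    set c : ℝ := ‖η x₀‖ with hc
    -- norm is locally constant near x₀
    have hm : IsLocalMax (fun x => ‖η x‖) x₀ := by
      have := hmax
      rwa [IsLocalMaxOn, nhdsWithin_eq_nhds.2 (hUo.mem_nhds hx₀)] at this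
    have hd : ∀ᶠ z in 𝓝 x₀, DifferentiableAt ℂ η z :=
      (hUo.eventually_mem hx₀).mono fun z hz => hη.differentiableAt (hUo.mem_nhds hz)
    have hnorm : ∀ᶠ w in 𝓝 x₀, ‖η w‖ = c :=
      Complex.norm_eventually_eq_of_isLocalMax hd hm
    obtain ⟨r, hr0, hr⟩ : ∃ r > 0, ∀ w ∈ ball x₀ r, ‖η w‖ = c ∧ w ∈ U := by
      have := hnorm.and (hUo.eventually_mem hx₀)
      rcases Metric.mem_nhds_iff.1 this with ⟨ε, hε0, hε⟩
      exact ⟨ε, hε0, fun w hw => hε hw⟩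
    -- η is constant on ball x₀ r thanks to the sphere hypothesis
    have hbase : ∀ w ∈ ball x₀ r, η w = e := by
      intro w hw
      rcases eq_or_ne c 0 with hc0 | hc0
      · have h1 : η w = 0 := norm_eq_zero.1 (by rw [(hr w hw).1, hc0])
        have h2 : e = 0 := norm_eq_zero.1 (by rw [← hc, hc0])
        rw [h1, h2]
      · have hcpos : 0 < c := lt_of_le_of_ne (norm_nonneg _) (Ne.symm hc0)
        set v : F := w - x₀ with hv
        have hvr : ‖v‖ < r := by
          rw [hv, ← dist_eq_norm]
          exact mem_ball.1 hw
        set γ : ℂ → E := fun z => (c⁻¹ : ℝ) • η (x₀ + z • v) with hγ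
        have hmem : ∀ z : ℂ, ‖z‖ ≤ 1 → x₀ + z • v ∈ ball x₀ r := by
          intro z hz
          rw [mem_ball, dist_eq_norm]
          have : ‖x₀ + z • v - x₀‖ = ‖z‖ * ‖v‖ := by
            rw [add_sub_cancel_left, norm_smul]
          rw [this]
          calc ‖z‖ * ‖v‖ ≤ 1 * ‖v‖ := by
                exact mul_le_mul_of_nonneg_right hz (norm_nonneg _)
            _ = ‖v‖ := one_mul _
            _ < r := hvr
        have hhol : HolOnDisc γ := by
          refine ⟨(fun z : ℂ => x₀ + z • v) ⁻¹' ball x₀ r, ?_, ?_, ?_⟩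
          · exact isOpen_ball.preimage
              (continuous_const.add (continuous_id.smul continuous_const))
          · intro z hz
            exact hmem z (by simpa [dist_eq_norm] using hz)
          · have hLd : Differentiable ℂ (fun z : ℂ => x₀ + z • v) :=
              (differentiable_id.smul_const v).const_add x₀
            have hcomp : DifferentiableOn ℂ (fun z : ℂ => η (x₀ + z • v))
                ((fun z : ℂ => x₀ + z • v) ⁻¹' ball x₀ r) := by
              refine hη.comp hLd.differentiableOn ?_
              intro z hz
              exact (hr _ hz).2
            exact hcomp.const_smul _
        have hsph : ∀ z ∈ closedBall (0 : ℂ) 1, ‖γ z‖ = 1 := by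
          intro z hz
          have hz1 : ‖z‖ ≤ 1 := by simpa [dist_eq_norm] using hz
          have := (hr _ (hmem z hz1)).1
          rw [hγ]
          simp only [norm_smul, this, Real.norm_eq_abs,
            abs_of_nonneg (inv_nonneg.2 hcpos.le)]
          exact inv_mul_cancel₀ hc0
        have heq := hpsh γ hhol hsph
        have h1 : γ 1 = γ 0 := heq (by simp)
        have h1' : (c⁻¹ : ℝ) • η w = (c⁻¹ : ℝ) • η x₀ := by
          have e1 : x₀ + (1 : ℂ) • v = w := by rw [one_smul, hv]; abel
          have e0 : x₀ + (0 : ℂ) • v = x₀ := by rw [zero_smul, add_zero]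
          have h1' := h1
          rw [hγ] at h1'
          simp only [e1, e0] at h1'
          exact h1'
        have := congrArg (fun u => (c : ℝ) • u) h1'
        simpa [smul_smul, mul_inv_cancel₀ hc0] using this
    -- propagate by a clopen argument using the 1-D identity theorem
    set A : Set F := {y | ∀ᶠ z in 𝓝 y, η z = e} with hA
    have hAopen : IsOpen A := isOpen_setOf_eventually_nhds
    have hx₀A : x₀ ∈ A :=
      Filter.eventually_of_mem (ball_mem_nhds x₀ hr0) hbase
    have hclosed : ∀ y ∈ U, y ∈ closure A → y ∈ A := by
      intro y hyU hyc
      obtain ⟨ρ, hρ0, hρ⟩ := Metric.isOpen_iff.1 hUo y hyU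
      obtain ⟨s, hsA, hsy⟩ : ∃ s ∈ A, dist s y < ρ / 8 := by
        have := Metric.mem_closure_iff.1 hyc (ρ / 8) (by linarith)
        rcases this with ⟨s, hsA, hsy⟩
        exact ⟨s, hsA, by rwa [dist_comm]⟩
      have hkey : ∀ w ∈ ball y (ρ / 2), η w = e := by
        intro w hw
        refine lineEq_aux hη (R := 7/6) (by norm_num) ?_ hsA
        intro z hz
        apply hρ
        rw [mem_ball, dist_eq_norm]
        have hsyn : ‖s - y‖ < ρ / 8 := by rwa [← dist_eq_norm]
        have hws : ‖w - s‖ < 5 * ρ / 8 := by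
          calc ‖w - s‖ = ‖(w - y) + (y - s)‖ := by abel_nf
            _ ≤ ‖w - y‖ + ‖y - s‖ := norm_add_le _ _
            _ < ρ / 2 + ρ / 8 := by
                have h1 : ‖w - y‖ < ρ / 2 := by rwa [← dist_eq_norm]
                have h2 : ‖y - s‖ < ρ / 8 := by rwa [norm_sub_rev]
                linarith
            _ = 5 * ρ / 8 := by ring
        calc ‖s + z • (w - s) - y‖ = ‖(s - y) + z • (w - s)‖ := by abel_nf
          _ ≤ ‖s - y‖ + ‖z • (w - s)‖ := norm_add_le _ _
          _ = ‖s - y‖ + ‖z‖ * ‖w - s‖ := by rw [norm_smul]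
          _ ≤ ‖s - y‖ + (7/6) * ‖w - s‖ := by
              have := mul_le_mul_of_nonneg_right hz.le (norm_nonneg (w - s))
              linarith
          _ < ρ / 8 + (7/6) * (5 * ρ / 8) := by
              have h76 : (0:ℝ) < 7/6 := by norm_num
              nlinarith [norm_nonneg (w - s)]
          _ ≤ ρ := by linarith
      exact Filter.eventually_of_mem (ball_mem_nhds y (by linarith)) hkey
    -- connectedness finishes the proof
    have hUA : U ⊆ A := by
      intro y' hy'U
      by_contra hy'A
      have hy'cl : y' ∉ closure A := fun h => hy'A (hclosed y' hy'U h)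
      have := hUc.isPreconnected A (closure A)ᶜ hAopen isClosed_closure.isOpen_compl
        (fun w hw => by
          by_cases hwc : w ∈ closure A
          · exact Or.inl (hclosed w hw hwc)
          · exact Or.inr hwc)
        ⟨x₀, hx₀, hx₀A⟩ ⟨y', hy'U, hy'cl⟩
      obtain ⟨p, _, hpA, hpc⟩ := this
      exact hpc (subset_closure hpA)
    have hxe : η x = e := (hUA hx).self_of_nhds
    have hye : η y = e := (hUA hy).self_of_nhds
    rw [hxe, hye]
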